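/- arXiv:1601.01715 — 5 statements merged into one kernel-verified Lean document; each statement's English description precedes it below -/
import Mathlib

section
/- Let A, B be n×n positive semidefinite complex matrices and 0 ≤ α ≤ 1. Then the largest eigenvalue satisfies λ₁(A^{α/2} B^α A^{α/2}) ≤ λ₁(A^{1/2} B A^{1/2})^α. -/
open Matrix Finset
open scoped ComplexOrder

/-- Functional calculus on a Hermitian matrix (junk value `0` if not Hermitian). -/
noncomputable def cfcH {n : ℕ} (f : ℝ → ℝ) (A : Matrix (Fin n) (Fin n) ℂ) :
    Matrix (Fin n) (Fin n) ℂ :=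
  if hA : A.IsHermitian then hA.cfc f else 0

/-- Real power of a (Hermitian) matrix via functional calculus. -/
noncomputable def mpow {n : ℕ} (A : Matrix (Fin n) (Fin n) ℂ) (p : ℝ) :
    Matrix (Fin n) (Fin n) ℂ :=
  cfcH (fun x : ℝ => x ^ p) A

/-- Eigenvalues of a Hermitian matrix arranged in decreasing order (junk `0` otherwise). -/
noncomputable def eigsDesc {n : ℕ} (A : Matrix (Fin n) (Fin n) ℂ) : Fin n → ℝ :=
  if hA : A.IsHermitian then fun i => (hA.eigenvalues ∘ Tuple.sort hA.eigenvalues) i.rev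
  else 0

/-- Operator norm of a matrix, acting on Euclidean space. -/
noncomputable def opNorm {n : ℕ} (A : Matrix (Fin n) (Fin n) ℂ) : ℝ :=
  ‖Matrix.toEuclideanCLM (𝕜 := ℂ) (n := Fin n) A‖

/-- Weighted geometric mean `A #_α B` for invertible `A`. -/
noncomputable def gmean {n : ℕ} (α : ℝ) (A B : Matrix (Fin n) (Fin n) ℂ) :
    Matrix (Fin n) (Fin n) ℂ :=
  mpow A (1/2) * cfcH (fun x : ℝ => x ^ α) (mpow A (-(1/2)) * B * mpow A (-(1/2))) * mpow A (1/2)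

/-!
The top eigenvalue of a positive semidefinite matrix is its operator norm, so the inequality is one
between norms of positive elements of a C⋆-algebra. For invertible `a` and
`K = ‖a^{1/2} b a^{1/2}‖`, conjugating `a^{1/2} b a^{1/2} ≤ K` by `a^{-1/2}` gives `b ≤ K a⁻¹`; the
Löwner–Heinz inequality turns this into `b^α ≤ K^α a^{-α}`, and conjugating by `a^{α/2}` gives
`a^{α/2} b^α a^{α/2} ≤ K^α`. A general `a` is replaced by `a + ε`: by `‖√x y √x‖ = ‖√y x √y‖` and
Löwner–Heinz again, this only increases the left side and changes `K` by at most `ε ‖b‖`.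
-/

open scoped NNReal
open CFC

namespace CFC

variable {A : Type*} [CStarAlgebra A] [PartialOrder A] [StarOrderedRing A]

lemma sqrt_rpow_of_exponent_nonneg {a : A} {r : ℝ} (hr : 0 ≤ r) : sqrt (a ^ r) = a ^ (r / 2) := by
  lift r to ℝ≥0 using hr
  exact sqrt_rpow_nnreal

lemma smul_rpow (r : ℝ≥0) {a : A} (ha : 0 ≤ a) {y : ℝ} (hy : 0 ≤ y) :
    (r • a) ^ y = r ^ y • a ^ y := by
  have hcont : Continuous fun x : ℝ≥0 => x ^ y := NNReal.continuous_rpow_const hy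
  simp only [rpow_def]
  rw [← cfc_comp_smul r _ a hcont.continuousOn ha, ← cfc_smul _ _ a hcont.continuousOn]
  exact cfc_congr fun x _ => by simp [NNReal.mul_rpow]

end CFC

namespace CStarAlgebra

variable {A : Type*} [CStarAlgebra A] [PartialOrder A] [StarOrderedRing A]

lemma isGreatest_norm_spectrum [Nontrivial A] {a : A} (ha : 0 ≤ a) :
    IsGreatest (spectrum ℝ a) ‖a‖ :=
  ⟨norm_mem_spectrum_of_nonneg ha,
    fun _ hx => (Real.le_norm_self _).trans (spectrum.norm_le_norm_of_mem hx)⟩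

lemma norm_sqrt_mul_mul_sqrt_comm {a b : A} (ha : 0 ≤ a) (hb : 0 ≤ b) :
    ‖sqrt a * b * sqrt a‖ = ‖sqrt b * a * sqrt b‖ := by
  have hsa : star (sqrt a) = sqrt a := (IsSelfAdjoint.of_nonneg (sqrt_nonneg a)).star_eq
  have hsb : star (sqrt b) = sqrt b := (IsSelfAdjoint.of_nonneg (sqrt_nonneg b)).star_eq
  have h₁ : sqrt a * b * sqrt a = star (sqrt b * sqrt a) * (sqrt b * sqrt a) := by
    conv_lhs => rw [← sqrt_mul_sqrt_self b hb]
    rw [star_mul, hsa, hsb]; noncomm_ring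
  have h₂ : sqrt b * a * sqrt b = (sqrt b * sqrt a) * star (sqrt b * sqrt a) := by
    conv_lhs => rw [← sqrt_mul_sqrt_self a ha]
    rw [star_mul, hsa, hsb]; noncomm_ring
  rw [h₁, h₂, CStarRing.norm_star_mul_self, CStarRing.norm_self_mul_star]

lemma norm_sqrt_mul_mul_sqrt_mono {a a' b : A} (ha : 0 ≤ a) (hb : 0 ≤ b) (haa' : a ≤ a') :
    ‖sqrt a * b * sqrt a‖ ≤ ‖sqrt a' * b * sqrt a'‖ := by
  rw [norm_sqrt_mul_mul_sqrt_comm ha hb, norm_sqrt_mul_mul_sqrt_comm (ha.trans haa') hb]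
  exact norm_le_norm_of_nonneg_of_le (conjugate_nonneg_of_nonneg ha (sqrt_nonneg b))
    (conjugate_le_conjugate_of_nonneg haa' (sqrt_nonneg b))

lemma norm_sqrt_add_algebraMap_mul_mul_sqrt_le {a b : A} (ha : 0 ≤ a) (hb : 0 ≤ b) {ε : ℝ}
    (hε : 0 < ε) :
    ‖sqrt (a + algebraMap ℝ A ε) * b * sqrt (a + algebraMap ℝ A ε)‖
      ≤ ‖sqrt a * b * sqrt a‖ + ε * ‖b‖ := by
  have hεA : 0 ≤ algebraMap ℝ A ε := (isStrictlyPositive_algebraMap hε).nonneg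
  have hsplit : sqrt b * (a + algebraMap ℝ A ε) * sqrt b = sqrt b * a * sqrt b + ε • b := by
    rw [mul_add, add_mul, Algebra.algebraMap_eq_smul_one, mul_smul_comm, mul_one, smul_mul_assoc,
      sqrt_mul_sqrt_self b hb]
  rw [norm_sqrt_mul_mul_sqrt_comm (add_nonneg ha hεA) hb, norm_sqrt_mul_mul_sqrt_comm ha hb,
    hsplit]
  refine (norm_add_le _ _).trans ?_
  rw [norm_smul, Real.norm_of_nonneg hε.le]

theorem norm_rpow_conj_le_of_isStrictlyPositive {a b : A} (ha : IsStrictlyPositive a)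
    (hb : 0 ≤ b) {α : ℝ} (hα : α ∈ Set.Icc 0 1) :
    ‖a ^ (α / 2) * b ^ α * a ^ (α / 2)‖ ≤ ‖a ^ (1 / 2 : ℝ) * b * a ^ (1 / 2 : ℝ)‖ ^ α := by
  set K := ‖a ^ (1 / 2 : ℝ) * b * a ^ (1 / 2 : ℝ)‖₊
  have hz : a ^ (1 / 2 : ℝ) * b * a ^ (1 / 2 : ℝ) ≤ algebraMap ℝ≥0 A K :=
    (nnnorm_le_iff_of_nonneg _ K (conjugate_nonneg_of_nonneg hb rpow_nonneg)).mp le_rfl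
  have hb_le : b ≤ K • a ^ (-1 : ℝ) := by
    convert conjugate_le_conjugate_of_nonneg hz (rpow_nonneg (a := a) (y := -(1 / 2))) using 1
    · rw [← mul_assoc, ← mul_assoc, rpow_neg_mul_rpow _ ha, one_mul, mul_assoc,
        rpow_mul_rpow_neg _ ha, mul_one]
    · rw [Algebra.algebraMap_eq_smul_one, mul_smul_comm, mul_one, smul_mul_assoc,
        ← rpow_add ha.isUnit]
      norm_num
  have hbα : b ^ α ≤ K ^ α • a ^ (-α) := by
    calc b ^ α ≤ (K • a ^ (-1 : ℝ)) ^ α := rpow_le_rpow hα hb_le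
      _ = K ^ α • a ^ (-α) := by
        rw [smul_rpow K rpow_nonneg hα.1, rpow_rpow a _ _ (by norm_num) ha]
        norm_num
  have hle : a ^ (α / 2) * b ^ α * a ^ (α / 2) ≤ algebraMap ℝ≥0 A (K ^ α) := by
    calc _ ≤ a ^ (α / 2) * (K ^ α • a ^ (-α)) * a ^ (α / 2) :=
          conjugate_le_conjugate_of_nonneg hbα rpow_nonneg
      _ = algebraMap ℝ≥0 A (K ^ α) := by
        rw [mul_smul_comm, smul_mul_assoc, ← rpow_add ha.isUnit, ← rpow_add ha.isUnit]
        ring_nf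
        rw [rpow_zero a ha.nonneg, Algebra.algebraMap_eq_smul_one]
  exact_mod_cast (nnnorm_le_iff_of_nonneg _ _
    (conjugate_nonneg_of_nonneg rpow_nonneg rpow_nonneg)).mpr hle

theorem norm_rpow_conj_le {a b : A} (ha : 0 ≤ a) (hb : 0 ≤ b) {α : ℝ} (hα : α ∈ Set.Icc 0 1) :
    ‖a ^ (α / 2) * b ^ α * a ^ (α / 2)‖ ≤ ‖a ^ (1 / 2 : ℝ) * b * a ^ (1 / 2 : ℝ)‖ ^ α := by
  set K := ‖a ^ (1 / 2 : ℝ) * b * a ^ (1 / 2 : ℝ)‖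
  have hbound : ∀ ε > 0, ‖a ^ (α / 2) * b ^ α * a ^ (α / 2)‖ ≤ (K + ε * ‖b‖) ^ α := by
    intro ε hε
    set a' := a + algebraMap ℝ A ε
    have hεA : IsStrictlyPositive (algebraMap ℝ A ε) := isStrictlyPositive_algebraMap hε
    calc ‖a ^ (α / 2) * b ^ α * a ^ (α / 2)‖ ≤ ‖a' ^ (α / 2) * b ^ α * a' ^ (α / 2)‖ := by
          simp only [← sqrt_rpow_of_exponent_nonneg hα.1]
          exact norm_sqrt_mul_mul_sqrt_mono rpow_nonneg rpow_nonneg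
            (rpow_le_rpow hα (le_add_of_nonneg_right hεA.nonneg))
      _ ≤ ‖a' ^ (1 / 2 : ℝ) * b * a' ^ (1 / 2 : ℝ)‖ ^ α :=
          norm_rpow_conj_le_of_isStrictlyPositive (.nonneg_add ha hεA) hb hα
      _ ≤ (K + ε * ‖b‖) ^ α := by
          refine Real.rpow_le_rpow (norm_nonneg _) ?_ hα.1
          simp only [K, a', ← sqrt_eq_rpow]
          exact norm_sqrt_add_algebraMap_mul_mul_sqrt_le ha hb hε
  have hcont : ContinuousWithinAt (fun ε : ℝ => (K + ε * ‖b‖) ^ α) (Set.Ioi 0) 0 :=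
    ((Real.continuous_rpow_const hα.1).comp (by fun_prop)).continuousWithinAt
  simpa using ge_of_tendsto hcont.tendsto (eventually_nhdsWithin_of_forall hbound)

end CStarAlgebra

open scoped MatrixOrder Matrix.Norms.L2Operator

lemma mpow_eq_rpow {n : ℕ} {A : Matrix (Fin n) (Fin n) ℂ} (hA : A.PosSemidef) (p : ℝ) :
    mpow A p = A ^ p := by
  rw [mpow, cfcH, dif_pos hA.1, ← hA.1.cfc_eq, CFC.rpow_eq_cfc_real hA.nonneg]

lemma Matrix.IsHermitian.isGreatest_eigsDesc_zero {n : ℕ} (hn : 0 < n)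
    {M : Matrix (Fin n) (Fin n) ℂ} (hM : M.IsHermitian) :
    IsGreatest (spectrum ℝ M) (eigsDesc M ⟨0, hn⟩) := by
  rw [eigsDesc, dif_pos hM, hM.spectrum_real_eq_range_eigenvalues]
  refine ⟨Set.mem_range_self _, ?_⟩
  rintro _ ⟨i, rfl⟩
  have hi : hM.eigenvalues i = (hM.eigenvalues ∘ Tuple.sort hM.eigenvalues)
      ((Tuple.sort hM.eigenvalues)⁻¹ i) := by simp
  rw [hi]
  refine Tuple.monotone_sort hM.eigenvalues (Fin.le_def.mpr ?_)
  simp only [Fin.val_rev]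
  omega

lemma eigsDesc_zero_eq_norm {n : ℕ} (hn : 0 < n) {M : Matrix (Fin n) (Fin n) ℂ}
    (hM : M.PosSemidef) : eigsDesc M ⟨0, hn⟩ = ‖M‖ :=
  haveI : Nonempty (Fin n) := ⟨⟨0, hn⟩⟩
  (hM.1.isGreatest_eigsDesc_zero hn).unique (CStarAlgebra.isGreatest_norm_spectrum hM.nonneg)

/-- Araki's log-majorization, top eigenvalue case:
`λ₁(A^{α/2} B^α A^{α/2}) ≤ λ₁(A^{1/2} B A^{1/2})^α` for `0 ≤ α ≤ 1`. -/
theorem araki_top_eigenvalue {n : ℕ} (hn : 0 < n)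
    (A B : Matrix (Fin n) (Fin n) ℂ) (hA : A.PosSemidef) (hB : B.PosSemidef)
    (α : ℝ) (hα0 : 0 ≤ α) (hα1 : α ≤ 1) :
    eigsDesc (mpow A (α/2) * mpow B α * mpow A (α/2)) ⟨0, hn⟩ ≤
      (eigsDesc (mpow A (1/2) * B * mpow A (1/2)) ⟨0, hn⟩) ^ α := by
  simp only [mpow_eq_rpow hA, mpow_eq_rpow hB]
  rw [eigsDesc_zero_eq_norm hn (conjugate_nonneg_of_nonneg rpow_nonneg rpow_nonneg).posSemidef,
    eigsDesc_zero_eq_norm hn (conjugate_nonneg_of_nonneg hB.nonneg rpow_nonneg).posSemidef]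
  exact CStarAlgebra.norm_rpow_conj_le hA.nonneg hB.nonneg ⟨hα0, hα1⟩
end

section
/- Let Φ : M_n → M_l and Ψ : M_m → M_l be positive linear maps with Φ(I_n)^{1/2} Ψ(I_m) Φ(I_n)^{1/2} ≤ I_l. If A ∈ M_n⁺ and B ∈ M_m⁺ satisfy Φ(A)^{1/2} Ψ(B) Φ(A)^{1/2} ≤ I_l, then for every 0 ≤ α ≤ 1, Φ(A^α)^{1/2} Ψ(B^α) Φ(A^α)^{1/2} ≤ I_l. -/
open Matrix Finset
open scoped ComplexOrder

/-!
Write `a # b = a^{1/2} (a^{-1/2} b a^{-1/2})^{1/2} a^{1/2}` for the geometric mean of positive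
definite `a` and `b`: it is the unique positive solution `g` of `g a⁻¹ g = b`, and the largest
positive `g` with `g a⁻¹ g ≤ b`. For invertible data the hypotheses read `Ψ(1) ≤ Φ(1)⁻¹` and
`Ψ(B) ≤ Φ(A)⁻¹`, and the set of exponents `s` with `Ψ(B^s) ≤ Φ(A^s)⁻¹` is closed and midpoint
convex: since `B^{(s+t)/2} = B^s # B^t`, Ando's inequality `Φ(x # y) ≤ Φ(x) # Φ(y)` together with
`(x # y)⁻¹ = x⁻¹ # y⁻¹` gives
`Ψ(B^{(s+t)/2}) ≤ Ψ(B^s) # Ψ(B^t) ≤ Φ(A^s)⁻¹ # Φ(A^t)⁻¹ = (Φ(A^s) # Φ(A^t))⁻¹ ≤ Φ(A^{(s+t)/2})⁻¹`.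
Ando's inequality follows from the maximality of `#` and the Kadison–Schwarz type inequality
`Φ(k) Φ(x)⁻¹ Φ(k) ≤ Φ(k x⁻¹ k)`, itself a sum of squares over a spectral decomposition of
`x^{-1/2} k x^{-1/2}`. The singular case follows by passing to `Φ + ε tr(·) I`, `A + ε I` and
`B + ε I`, for which the hypotheses hold up to a factor tending to `1`, and letting `ε → 0`.
-/

open CFC Ring

section GeomMean

variable {A : Type*} [CStarAlgebra A] [PartialOrder A] [StarOrderedRing A]

noncomputable def geomMean (a b : A) : A := conjSqrt a (sqrt (conjSqrt a⁻¹ʳ b))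

variable {a b g : A}

lemma conjSqrt_nonneg (c : A) {x : A} (hx : 0 ≤ x) : 0 ≤ conjSqrt c x := by
  simpa using conjSqrt_le_conjSqrt (c := c) hx

lemma conjSqrt_ringInverse_mul_ringInverse_mul (ha : IsStrictlyPositive a) (g : A) :
    conjSqrt a⁻¹ʳ (g * a⁻¹ʳ * g) = conjSqrt a⁻¹ʳ g ^ 2 := by
  simp only [conjSqrt_apply, sq, mul_assoc]
  rw [← mul_assoc (sqrt a⁻¹ʳ) (sqrt a⁻¹ʳ), sqrt_mul_sqrt_self _ ha.ringInverse.nonneg]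

lemma geomMean_nonneg (a b : A) : 0 ≤ geomMean a b := conjSqrt_nonneg a (sqrt_nonneg _)

lemma IsStrictlyPositive.geomMean (ha : IsStrictlyPositive a) (hb : IsStrictlyPositive b) :
    IsStrictlyPositive (geomMean a b) :=
  (isStrictlyPositive_conjSqrt_iff _ _ ha).mpr <| IsStrictlyPositive.sqrt _ <|
    (isStrictlyPositive_conjSqrt_iff _ _ ha.ringInverse).mpr hb

lemma eq_geomMean (ha : IsStrictlyPositive a) (hg : 0 ≤ g) (h : g * a⁻¹ʳ * g = b) :
    g = geomMean a b := by
  rw [geomMean, ← h, conjSqrt_ringInverse_mul_ringInverse_mul ha,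
    sqrt_sq _ (conjSqrt_nonneg _ hg), conjSqrt_conjSqrt_ringInverse _ _ ha]

lemma geomMean_mul_ringInverse_mul_self (ha : IsStrictlyPositive a) (hb : 0 ≤ b) :
    geomMean a b * a⁻¹ʳ * geomMean a b = b := by
  have h := conjSqrt_ringInverse_mul_ringInverse_mul ha (geomMean a b)
  rw [show conjSqrt a⁻¹ʳ (geomMean a b) = sqrt (conjSqrt a⁻¹ʳ b) from
      conjSqrt_ringInverse_conjSqrt _ _ ha, sq_sqrt _ (conjSqrt_nonneg _ hb)] at h
  rw [← conjSqrt_conjSqrt_ringInverse a (geomMean a b * a⁻¹ʳ * geomMean a b) ha, h,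
    conjSqrt_conjSqrt_ringInverse a b ha]

lemma le_geomMean (ha : IsStrictlyPositive a) (hg : 0 ≤ g) (h : g * a⁻¹ʳ * g ≤ b) :
    g ≤ geomMean a b := by
  rw [← conjSqrt_conjSqrt_ringInverse a g ha, geomMean]
  gcongr
  rw [← sqrt_sq (conjSqrt a⁻¹ʳ g) (conjSqrt_nonneg _ hg),
    ← conjSqrt_ringInverse_mul_ringInverse_mul ha]
  exact sqrt_le_sqrt _ _ (conjSqrt_le_conjSqrt h)

lemma geomMean_mono {a' b' : A} (ha : IsStrictlyPositive a) (hb : 0 ≤ b) (haa' : a ≤ a')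
    (hbb' : b ≤ b') : geomMean a b ≤ geomMean a' b' := by
  refine le_geomMean (ha.of_le haa') (geomMean_nonneg a b) ?_
  calc geomMean a b * a'⁻¹ʳ * geomMean a b ≤ geomMean a b * a⁻¹ʳ * geomMean a b :=
        (geomMean_nonneg a b).isSelfAdjoint.conjugate_le_conjugate
          (CStarAlgebra.ringInverse_le_ringInverse haa')
    _ = b := geomMean_mul_ringInverse_mul_self ha hb
    _ ≤ b' := hbb'

lemma ringInverse_geomMean (ha : IsStrictlyPositive a) (hb : IsStrictlyPositive b) :
    (geomMean a b)⁻¹ʳ = geomMean a⁻¹ʳ b⁻¹ʳ := by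
  have hG := (ha.geomMean hb).isUnit
  refine eq_geomMean ha.ringInverse (ha.geomMean hb).ringInverse.nonneg ?_
  conv_rhs => rw [← geomMean_mul_ringInverse_mul_self ha hb.nonneg]
  rw [Ring.inverse_mul (.inl (hG.mul ha.ringInverse.isUnit)), Ring.inverse_mul (.inl hG),
    Ring.inverse_inverse ha.isUnit, mul_assoc]

lemma geomMean_rpow_rpow {c : A} (hc : IsStrictlyPositive c) (s t : ℝ) :
    geomMean (c ^ s) (c ^ t) = c ^ ((s + t) / 2) := by
  refine (eq_geomMean (IsStrictlyPositive.rpow c s hc) rpow_nonneg ?_).symm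
  calc c ^ ((s + t) / 2) * (c ^ s)⁻¹ʳ * c ^ ((s + t) / 2)
      = c ^ ((t - s) / 2) * c ^ s * (c ^ s)⁻¹ʳ * c ^ ((s + t) / 2) := by
        rw [← rpow_add hc.isUnit]; ring_nf
    _ = c ^ t := by
        rw [mul_inverse_cancel_right _ _ (IsStrictlyPositive.rpow c s hc).isUnit,
          ← rpow_add hc.isUnit]
        ring_nf

end GeomMean

section KadisonSchwarz

lemma mul_mul_le_sum_sq_smul {B : Type*} [Ring B] [StarRing B] [PartialOrder B]
    [StarOrderedRing B] [Algebra ℝ B] [StarModule ℝ B] {ι : Type*} (s : Finset ι) (Q : ι → B)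
    (hQ : ∀ i ∈ s, 0 ≤ Q i) (μ : ι → ℝ) {V : B} (hV : IsSelfAdjoint V)
    (hVWV : V * (∑ i ∈ s, Q i) * V = V) :
    (∑ i ∈ s, μ i • Q i) * V * (∑ i ∈ s, μ i • Q i) ≤ ∑ i ∈ s, (μ i ^ 2) • Q i := by
  set R := ∑ i ∈ s, μ i • Q i
  have hR : IsSelfAdjoint R :=
    isSelfAdjoint_sum s fun i hi => (IsSelfAdjoint.all (μ i)).smul (hQ i hi).isSelfAdjoint
  have hterm : ∀ i, star (algebraMap ℝ B (μ i) - V * R) * Q i * (algebraMap ℝ B (μ i) - V * R)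
      = (μ i ^ 2) • Q i - μ i • (Q i * (V * R)) - μ i • (R * V * Q i)
        + R * V * Q i * (V * R) := by
    intro i
    simp only [star_sub, star_mul, hV.star_eq, hR.star_eq, ← algebraMap_star_comm, star_trivial,
      sub_mul, mul_sub, Algebra.smul_def, Algebra.commutes, mul_assoc]
    rw [← map_mul, ← sq]
    abel
  have h1 : ∑ i ∈ s, μ i • (Q i * (V * R)) = R * (V * R) := by
    simp only [← smul_mul_assoc, ← Finset.sum_mul, R]
  have h2 : ∑ i ∈ s, μ i • (R * V * Q i) = R * V * R := by
    simp only [← mul_smul_comm, ← Finset.mul_sum, R]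
  have h3 : ∑ i ∈ s, R * V * Q i * (V * R) = R * V * R := by
    rw [← Finset.sum_mul, ← Finset.mul_sum, ← mul_assoc, mul_assoc R, mul_assoc R, hVWV]
  rw [← sub_nonneg]
  convert Finset.sum_nonneg fun i hi =>
    star_left_conjugate_nonneg (hQ i hi) (algebraMap ℝ B (μ i) - V * R) using 1
  simp only [hterm, Finset.sum_add_distrib, Finset.sum_sub_distrib, h1, h2, h3]
  noncomm_ring

variable {A : Type*} [CStarAlgebra A]

noncomputable def spectralProj (y : A) (μ : ℝ) : A := cfc (fun t : ℝ => if t = μ then 1 else 0) y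

lemma spectralProj_nonneg [PartialOrder A] [StarOrderedRing A] (y : A) (μ : ℝ) :
    0 ≤ spectralProj y μ :=
  cfc_nonneg fun t _ => by split_ifs <;> norm_num

lemma cfc_eq_sum_smul_spectralProj {y : A} (hfin : (spectrum ℝ y).Finite) (f : ℝ → ℝ) :
    cfc f y = ∑ μ ∈ hfin.toFinset, f μ • spectralProj y μ := by
  have hcont : ∀ g : ℝ → ℝ, ContinuousOn g (spectrum ℝ y) := fun g => hfin.continuousOn g
  simp only [spectralProj]
  rw [Finset.sum_congr rfl fun μ _ => (cfc_smul (f μ) _ y (hcont _)).symm,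
    ← cfc_sum _ _ _ fun μ _ => hcont _]
  refine cfc_congr fun t ht => ?_
  simp [Finset.sum_apply, hfin.mem_toFinset.mpr ht]

open scoped MatrixOrder Matrix.Norms.L2Operator in
theorem PositiveLinearMap.map_mul_ringInverse_mul_le {n : Type*} [Fintype n] [DecidableEq n]
    {B : Type*} [CStarAlgebra B] [PartialOrder B] [StarOrderedRing B]
    (Φ : Matrix n n ℂ →ₚ[ℂ] B) {x k : Matrix n n ℂ} (hx : IsStrictlyPositive x)
    (hk : IsSelfAdjoint k) : Φ k * (Φ x)⁻¹ʳ * Φ k ≤ Φ (k * x⁻¹ʳ * k) := by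
  set y := conjSqrt x⁻¹ʳ k with hy_def
  have hy : IsSelfAdjoint y := by
    rw [hy_def, conjSqrt_apply]
    exact hk.conjugate_self (sqrt_nonneg _).isSelfAdjoint
  have hfin : (spectrum ℝ y).Finite := Matrix.finite_real_spectrum
  set Q : ℝ → B := fun μ => Φ (conjSqrt x (spectralProj y μ))
  have hQ : ∀ μ ∈ hfin.toFinset, 0 ≤ Q μ := fun μ _ =>
    map_nonneg Φ (conjSqrt_nonneg x (spectralProj_nonneg y μ))
  have hsum : ∀ f : ℝ → ℝ, Φ (conjSqrt x (cfc f y)) = ∑ μ ∈ hfin.toFinset, f μ • Q μ := by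
    intro f
    rw [cfc_eq_sum_smul_spectralProj hfin, map_sum, map_sum]
    simp only [map_smul, map_smul_of_tower, Q]
  have hW : ∑ μ ∈ hfin.toFinset, (1 : ℝ) • Q μ = Φ x :=
    (hsum fun _ => 1).symm.trans (by rw [cfc_const_one ℝ y, conjSqrt_one x hx.nonneg])
  have hR : ∑ μ ∈ hfin.toFinset, μ • Q μ = Φ k :=
    (hsum id).symm.trans (by rw [cfc_id ℝ y hy, hy_def, conjSqrt_conjSqrt_ringInverse x k hx])
  have hS : ∑ μ ∈ hfin.toFinset, μ ^ 2 • Q μ = Φ (k * x⁻¹ʳ * k) :=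
    (hsum (· ^ 2)).symm.trans (by rw [cfc_pow_id y 2 hy, hy_def,
      ← conjSqrt_ringInverse_mul_ringInverse_mul hx, conjSqrt_conjSqrt_ringInverse x _ hx])
  simp only [one_smul] at hW
  -- `Ring.inverse` is `0` off the units, and `0` has both properties
  obtain ⟨hV, hVWV⟩ : IsSelfAdjoint (Φ x)⁻¹ʳ ∧ (Φ x)⁻¹ʳ * Φ x * (Φ x)⁻¹ʳ = (Φ x)⁻¹ʳ := by
    by_cases hu : IsUnit (Φ x)
    · exact ⟨(hu.isStrictlyPositive (map_nonneg Φ hx.nonneg)).ringInverse.isSelfAdjoint,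
        by rw [inverse_mul_cancel _ hu, one_mul]⟩
    · simp [Ring.inverse_non_unit _ hu]
  rw [← hR, ← hS]
  exact mul_mul_le_sum_sq_smul _ Q hQ id hV (by rwa [hW])

end KadisonSchwarz

section Continuity

variable {A : Type*} [CStarAlgebra A] [PartialOrder A] [StarOrderedRing A]

lemma continuousOn_rpow_const {p : ℝ} (hp : 0 ≤ p) :
    ContinuousOn (fun a : A => a ^ p) {a | 0 ≤ a} := by
  simp only [rpow_def]
  exact ContinuousOn.cfc_nnreal_of_mem_nhdsSet _ Filter.univ_mem continuousOn_id (fun a ha => ha)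
    (NNReal.continuous_rpow_const hp).continuousOn

lemma continuous_rpow_of_finite_spectrum {b : A} (hb : IsStrictlyPositive b)
    (hfin : (spectrum ℝ b).Finite) : Continuous fun s : ℝ => b ^ s := by
  simp_rw [rpow_eq_cfc_real hb.nonneg, cfc_eq_sum_smul_spectralProj hfin]
  refine continuous_finsetSum _ fun μ hμ => ?_
  have hμ : 0 < μ := hb.spectrum_pos (hfin.mem_toFinset.mp hμ)
  exact (continuous_const.rpow continuous_id fun _ => .inl hμ.ne').smul continuous_const

lemma Continuous.conjSqrt {X : Type*} [TopologicalSpace X] {x y : X → A} (hx : Continuous x)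
    (hy : Continuous y) (hx0 : ∀ t, 0 ≤ x t) :
    Continuous fun t => CFC.conjSqrt (x t) (y t) := by
  have hsqrt : Continuous fun t => CFC.sqrt (x t) := by
    simp_rw [sqrt_eq_rpow]
    exact (continuousOn_rpow_const (by norm_num : (0 : ℝ) ≤ 1 / 2)).comp_continuous hx hx0
  simp_rw [conjSqrt_apply]
  exact (hsqrt.mul hy).mul hsqrt

end Continuity

lemma IsClosed.Icc_subset_of_add_div_two_mem {S : Set ℝ} (hS : IsClosed S) {a b : ℝ}
    (ha : a ∈ S) (hb : b ∈ S) (hmid : ∀ s ∈ S, ∀ t ∈ S, (s + t) / 2 ∈ S) : Set.Icc a b ⊆ S := by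
  intro x ⟨hax, hxb⟩
  by_contra hx
  -- `(u, v)` is the gap of `S` around `x`; its midpoint cannot lie in `S`
  have hK₁ : IsCompact (S ∩ Set.Icc a x) := isCompact_Icc.inter_left hS
  have hK₂ : IsCompact (S ∩ Set.Icc x b) := isCompact_Icc.inter_left hS
  have hu := hK₁.sSup_mem ⟨a, ha, le_rfl, hax⟩
  have hv := hK₂.sInf_mem ⟨b, hb, hxb, le_rfl⟩
  set u := sSup (S ∩ Set.Icc a x)
  set v := sInf (S ∩ Set.Icc x b)
  have hux : u < x := lt_of_le_of_ne hu.2.2 fun h => hx (h ▸ hu.1)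
  have hxv : x < v := lt_of_le_of_ne hv.2.1 fun h => hx (h ▸ hv.1)
  have hm := hmid u hu.1 v hv.1
  rcases le_total ((u + v) / 2) x with hmx | hxm
  · have : (u + v) / 2 ≤ u := le_csSup hK₁.bddAbove ⟨hm, by linarith [hu.2.1], hmx⟩
    linarith
  · have : v ≤ (u + v) / 2 := csInf_le hK₂.bddBelow ⟨hm, hxm, by linarith [hv.2.2]⟩
    linarith

section InvertibleCase

open scoped MatrixOrder Matrix.Norms.L2Operator

variable {n m : Type*} [Fintype n] [DecidableEq n] [Fintype m] [DecidableEq m]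
  {B : Type*} [CStarAlgebra B] [PartialOrder B] [StarOrderedRing B]

theorem PositiveLinearMap.map_geomMean_le (Φ : Matrix n n ℂ →ₚ[ℂ] B) {a b : Matrix n n ℂ}
    (ha : IsStrictlyPositive a) (hb : 0 ≤ b) (hΦa : IsStrictlyPositive (Φ a)) :
    Φ (geomMean a b) ≤ geomMean (Φ a) (Φ b) := by
  refine le_geomMean hΦa (map_nonneg Φ (geomMean_nonneg a b)) ?_
  simpa [geomMean_mul_ringInverse_mul_self ha hb] using
    Φ.map_mul_ringInverse_mul_le ha (geomMean_nonneg a b).isSelfAdjoint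

variable (Φ : Matrix n n ℂ →ₚ[ℂ] B) (Ψ : Matrix m m ℂ →ₚ[ℂ] B)
  (hΦ : ∀ x, IsStrictlyPositive x → IsStrictlyPositive (Φ x))
  (hΨ : ∀ x, IsStrictlyPositive x → IsStrictlyPositive (Ψ x))
  {a : Matrix n n ℂ} {b : Matrix m m ℂ} (ha : IsStrictlyPositive a) (hb : IsStrictlyPositive b)
include hΦ hΨ ha hb

lemma map_rpow_le_ringInverse_add_div_two {s t : ℝ} (hs : Ψ (b ^ s) ≤ (Φ (a ^ s))⁻¹ʳ)
    (ht : Ψ (b ^ t) ≤ (Φ (a ^ t))⁻¹ʳ) :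
    Ψ (b ^ ((s + t) / 2)) ≤ (Φ (a ^ ((s + t) / 2)))⁻¹ʳ := by
  have has := IsStrictlyPositive.rpow a s ha
  have hat := IsStrictlyPositive.rpow a t ha
  have hbs := IsStrictlyPositive.rpow b s hb
  calc Ψ (b ^ ((s + t) / 2)) = Ψ (geomMean (b ^ s) (b ^ t)) := by rw [geomMean_rpow_rpow hb]
    _ ≤ geomMean (Ψ (b ^ s)) (Ψ (b ^ t)) := Ψ.map_geomMean_le hbs rpow_nonneg (hΨ _ hbs)
    _ ≤ geomMean (Φ (a ^ s))⁻¹ʳ (Φ (a ^ t))⁻¹ʳ :=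
        geomMean_mono (hΨ _ hbs) (map_nonneg Ψ rpow_nonneg) hs ht
    _ = (geomMean (Φ (a ^ s)) (Φ (a ^ t)))⁻¹ʳ := (ringInverse_geomMean (hΦ _ has) (hΦ _ hat)).symm
    _ ≤ (Φ (geomMean (a ^ s) (a ^ t)))⁻¹ʳ :=
        CStarAlgebra.ringInverse_le_ringInverse (Φ.map_geomMean_le has rpow_nonneg (hΦ _ has))
          (hΦ _ (has.geomMean hat))
    _ = (Φ (a ^ ((s + t) / 2)))⁻¹ʳ := by rw [geomMean_rpow_rpow ha]

theorem map_rpow_le_ringInverse (h1 : Ψ 1 ≤ (Φ 1)⁻¹ʳ) (hab : Ψ b ≤ (Φ a)⁻¹ʳ) {α : ℝ}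
    (hα : α ∈ Set.Icc (0 : ℝ) 1) : Ψ (b ^ α) ≤ (Φ (a ^ α))⁻¹ʳ := by
  have hΦa : Continuous fun s : ℝ => Φ (a ^ s) :=
    (map_continuous Φ).comp (continuous_rpow_of_finite_spectrum ha Matrix.finite_real_spectrum)
  have hΨb : Continuous fun s : ℝ => Ψ (b ^ s) :=
    (map_continuous Ψ).comp (continuous_rpow_of_finite_spectrum hb Matrix.finite_real_spectrum)
  have hclosed : IsClosed {s : ℝ | Ψ (b ^ s) ≤ (Φ (a ^ s))⁻¹ʳ} := by
    refine isClosed_le hΨb (continuous_iff_continuousAt.mpr fun s => ?_)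
    exact (NormedRing.inverse_continuousAt (hΦ _ (IsStrictlyPositive.rpow a s ha)).isUnit.unit
      ).comp_of_eq hΦa.continuousAt (IsUnit.unit_spec _).symm
  refine hclosed.Icc_subset_of_add_div_two_mem ?_ ?_
    (fun s hs t ht => map_rpow_le_ringInverse_add_div_two Φ Ψ hΦ hΨ ha hb hs ht) hα
  · simpa [rpow_zero a ha.nonneg, rpow_zero b hb.nonneg] using h1
  · simpa [rpow_one a ha.nonneg, rpow_one b hb.nonneg] using hab

end InvertibleCase

lemma norm_conjSqrt_le_one_iff {B : Type*} [CStarAlgebra B] [PartialOrder B] [StarOrderedRing B]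
    {x y : B} (hx : IsStrictlyPositive x) (hy : 0 ≤ y) : ‖conjSqrt x y‖ ≤ 1 ↔ y ≤ x⁻¹ʳ := by
  rw [CStarAlgebra.norm_le_iff_le_algebraMap _ zero_le_one (conjSqrt_nonneg x hy), map_one]
  constructor
  · intro h
    simpa [conjSqrt_ringInverse_conjSqrt _ _ hx, conjSqrt_one _ hx.ringInverse.nonneg] using
      conjSqrt_le_conjSqrt (c := x⁻¹ʳ) h
  · intro h
    calc conjSqrt x y ≤ conjSqrt x x⁻¹ʳ := conjSqrt_le_conjSqrt h
      _ = conjSqrt x (conjSqrt x⁻¹ʳ 1) := by rw [conjSqrt_one _ hx.ringInverse.nonneg]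
      _ = 1 := conjSqrt_conjSqrt_ringInverse x 1 hx

section Regularization

open scoped NNReal MatrixOrder Matrix.Norms.L2Operator

variable {n : Type*} [Fintype n] {B : Type*} [CStarAlgebra B] [PartialOrder B] [StarOrderedRing B]

noncomputable def PositiveLinearMap.regularize (Φ : Matrix n n ℂ →ₚ[ℂ] B) (s t : ℝ≥0) :
    Matrix n n ℂ →ₚ[ℂ] B :=
  .mk₀ ((s : ℂ) • (Φ.toLinearMap + (t : ℂ) • (Matrix.traceLinearMap n ℂ ℂ).smulRight 1))
    fun x hx => by
      have htr : 0 ≤ x.trace := (nonneg_iff_posSemidef.mp hx).trace_nonneg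
      simp only [LinearMap.smul_apply, LinearMap.add_apply, LinearMap.smulRight_apply,
        traceLinearMap_apply, PositiveLinearMap.coe_toLinearMap]
      refine smul_nonneg (by simp) (add_nonneg (map_nonneg Φ hx) (smul_nonneg (by simp) ?_))
      exact smul_nonneg htr zero_le_one

namespace PositiveLinearMap

variable (Φ : Matrix n n ℂ →ₚ[ℂ] B)

lemma regularize_apply (s t : ℝ≥0) (x : Matrix n n ℂ) :
    Φ.regularize s t x = (s : ℂ) • (Φ x + (t : ℂ) • x.trace • 1) := rfl

lemma regularize_zero (x : Matrix n n ℂ) : Φ.regularize 1 0 x = Φ x := by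
  simp [regularize_apply]

lemma norm_conjSqrt_regularize (y : B) (s t : ℝ≥0) (x : Matrix n n ℂ) :
    ‖conjSqrt y (Φ.regularize s t x)‖ = s * ‖conjSqrt y (Φ.regularize 1 t x)‖ := by
  have : Φ.regularize s t x = (s : ℝ) • Φ.regularize 1 t x := by
    simp [regularize_apply, ← Complex.coe_smul]
  rw [this, map_smul, norm_smul, Real.norm_of_nonneg s.coe_nonneg]

variable [DecidableEq n]

lemma isStrictlyPositive_regularize [Nonempty n] {s t : ℝ≥0} (hs : 0 < s) (ht : 0 < t)
    {x : Matrix n n ℂ} (hx : IsStrictlyPositive x) : IsStrictlyPositive (Φ.regularize s t x) := by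
  have htr : 0 < x.trace := (isStrictlyPositive_iff_posDef.mp hx).trace_pos
  refine .smul (by simpa using hs) (isStrictlyPositive_add (.inr ⟨map_nonneg Φ hx.nonneg, ?_⟩))
  exact .smul (by simpa using ht) (.smul htr isStrictlyPositive_one)

lemma continuous_regularize {x : ℝ≥0 → Matrix n n ℂ} (hx : Continuous x) :
    Continuous fun ε => Φ.regularize 1 ε (x ε) := by
  simp only [regularize_apply]
  fun_prop

end PositiveLinearMap

end Regularization

section SingularCase

open scoped NNReal Topology MatrixOrder Matrix.Norms.L2Operator
open Filter

variable {n m : Type*} [Fintype n] [DecidableEq n] [Fintype m] [DecidableEq m]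
  {B : Type*} [CStarAlgebra B] [PartialOrder B] [StarOrderedRing B]
  (Φ : Matrix n n ℂ →ₚ[ℂ] B) (Ψ : Matrix m m ℂ →ₚ[ℂ] B)

lemma norm_conjSqrt_regularize_rpow_le [Nonempty n] [Nonempty m] {ε : ℝ≥0} (hε : 0 < ε)
    {a : Matrix n n ℂ} {b : Matrix m m ℂ} (ha : IsStrictlyPositive a) (hb : IsStrictlyPositive b)
    {c : ℝ} (hc : 0 < c) (h1 : ‖conjSqrt (Φ.regularize 1 ε 1) (Ψ.regularize 1 ε 1)‖ ≤ c)
    (hab : ‖conjSqrt (Φ.regularize 1 ε a) (Ψ.regularize 1 ε b)‖ ≤ c) {α : ℝ}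
    (hα : α ∈ Set.Icc (0 : ℝ) 1) :
    ‖conjSqrt (Φ.regularize 1 ε (a ^ α)) (Ψ.regularize 1 ε (b ^ α))‖ ≤ c := by
  have hΦ := fun x (hx : IsStrictlyPositive x) => Φ.isStrictlyPositive_regularize one_pos hε hx
  have hΨ := fun x (hx : IsStrictlyPositive x) =>
    Ψ.isStrictlyPositive_regularize (inv_pos.mpr (Real.toNNReal_pos.mpr hc)) hε hx
  have key : ∀ x y, IsStrictlyPositive x → 0 ≤ y →
      (‖conjSqrt (Φ.regularize 1 ε x) (Ψ.regularize 1 ε y)‖ ≤ c ↔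
        Ψ.regularize c.toNNReal⁻¹ ε y ≤ (Φ.regularize 1 ε x)⁻¹ʳ) := by
    intro x y hx hy
    rw [← norm_conjSqrt_le_one_iff (hΦ x hx) (map_nonneg _ hy),
      Ψ.norm_conjSqrt_regularize _ c.toNNReal⁻¹, NNReal.coe_inv, Real.coe_toNNReal _ hc.le,
      inv_mul_le_one₀ hc]
  rw [key _ _ (IsStrictlyPositive.rpow a α ha) rpow_nonneg]
  exact map_rpow_le_ringInverse _ _ hΦ hΨ ha hb
    ((key _ _ isStrictlyPositive_one zero_le_one).mp h1) ((key _ _ ha hb.nonneg).mp hab) hα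

lemma tendsto_norm_conjSqrt_regularize {x : ℝ≥0 → Matrix n n ℂ} {y : ℝ≥0 → Matrix m m ℂ}
    (hx : Continuous x) (hy : Continuous y) (hx0 : ∀ ε, 0 ≤ x ε) :
    Tendsto (fun ε => ‖conjSqrt (Φ.regularize 1 ε (x ε)) (Ψ.regularize 1 ε (y ε))‖) (𝓝[>] 0)
      (𝓝 ‖conjSqrt (Φ (x 0)) (Ψ (y 0))‖) := by
  rw [← Φ.regularize_zero, ← Ψ.regularize_zero]
  exact ((Continuous.conjSqrt (Φ.continuous_regularize hx) (Ψ.continuous_regularize hy)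
    fun ε => map_nonneg _ (hx0 ε)).norm.tendsto 0).mono_left nhdsWithin_le_nhds

theorem conjSqrt_map_rpow_le_one {a : Matrix n n ℂ} {b : Matrix m m ℂ} (ha : 0 ≤ a) (hb : 0 ≤ b)
    (h1 : conjSqrt (Φ 1) (Ψ 1) ≤ 1) (hab : conjSqrt (Φ a) (Ψ b) ≤ 1) {α : ℝ}
    (hα : α ∈ Set.Icc (0 : ℝ) 1) : conjSqrt (Φ (a ^ α)) (Ψ (b ^ α)) ≤ 1 := by
  rcases isEmpty_or_nonempty n with hn | hn
  · simp [Subsingleton.elim (a ^ α) 0, conjSqrt_apply]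
  rcases isEmpty_or_nonempty m with hm | hm
  · simp [Subsingleton.elim (b ^ α) 0, conjSqrt_apply]
  rw [← CStarAlgebra.norm_le_one_iff_of_nonneg _ (conjSqrt_nonneg _ (map_nonneg Ψ zero_le_one))]
    at h1
  rw [← CStarAlgebra.norm_le_one_iff_of_nonneg _ (conjSqrt_nonneg _ (map_nonneg Ψ hb))] at hab
  rw [← CStarAlgebra.norm_le_one_iff_of_nonneg _ (conjSqrt_nonneg _ (map_nonneg Ψ rpow_nonneg))]
  set aε : ℝ≥0 → Matrix n n ℂ := fun ε => a + algebraMap ℝ≥0 _ ε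
  set bε : ℝ≥0 → Matrix m m ℂ := fun ε => b + algebraMap ℝ≥0 _ ε
  set N : (ℝ≥0 → Matrix n n ℂ) → (ℝ≥0 → Matrix m m ℂ) → ℝ≥0 → ℝ := fun x y ε =>
    ‖conjSqrt (Φ.regularize 1 ε (x ε)) (Ψ.regularize 1 ε (y ε))‖
  have haε : ∀ ε, 0 ≤ aε ε := fun ε => add_nonneg ha (algebraMap_nonneg _ (zero_le : 0 ≤ ε))
  have hbε : ∀ ε, 0 ≤ bε ε := fun ε => add_nonneg hb (algebraMap_nonneg _ (zero_le : 0 ≤ ε))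
  have hcont_aε : Continuous aε := by fun_prop
  have hcont_bε : Continuous bε := by fun_prop
  -- for `ε > 0` the hypotheses hold with the constant `max 1 …`, which tends to `1`
  have hbound : ∀ᶠ ε in 𝓝[>] 0,
      N (aε · ^ α) (bε · ^ α) ε ≤ max 1 (max (N (fun _ => 1) (fun _ => 1) ε) (N aε bε ε)) := by
    filter_upwards [self_mem_nhdsWithin] with ε (hε : 0 < ε)
    exact norm_conjSqrt_regularize_rpow_le Φ Ψ hε
      (isStrictlyPositive_add (.inr ⟨ha, isStrictlyPositive_algebraMap hε⟩))
      (isStrictlyPositive_add (.inr ⟨hb, isStrictlyPositive_algebraMap hε⟩))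
      (one_pos.trans_le (le_max_left _ _)) (le_max_of_le_right (le_max_left _ _))
      (le_max_of_le_right (le_max_right _ _)) hα
  have hlim := le_of_tendsto_of_tendsto
    (tendsto_norm_conjSqrt_regularize Φ Ψ
      ((continuousOn_rpow_const hα.1).comp_continuous hcont_aε haε)
      ((continuousOn_rpow_const hα.1).comp_continuous hcont_bε hbε) fun _ => rpow_nonneg)
    (tendsto_const_nhds.max
      ((tendsto_norm_conjSqrt_regularize Φ Ψ continuous_const continuous_const
        fun _ => zero_le_one).max (tendsto_norm_conjSqrt_regularize Φ Ψ hcont_aε hcont_bε haε)))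
    hbound
  simp only [aε, bε, Function.comp_apply, map_zero, add_zero] at hlim
  rwa [max_eq_left (max_le h1 hab)] at hlim

end SingularCase

section Translation

open scoped MatrixOrder Matrix.Norms.L2Operator

variable {k : ℕ} {X : Matrix (Fin k) (Fin k) ℂ}

lemma mpow_eq_rpow_s2 (hX : X.PosSemidef) (p : ℝ) : mpow X p = X ^ p := by
  rw [mpow, cfcH, dif_pos hX.1, ← hX.1.cfc_eq, rpow_eq_cfc_real (nonneg_iff_posSemidef.mpr hX)]

lemma posSemidef_one_sub_mpow_mul_mul_mpow_iff (hX : X.PosSemidef)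
    (Y : Matrix (Fin k) (Fin k) ℂ) :
    (1 - mpow X (1/2) * Y * mpow X (1/2)).PosSemidef ↔ conjSqrt X Y ≤ 1 := by
  rw [← le_iff, conjSqrt_apply, sqrt_eq_rpow, mpow_eq_rpow_s2 hX]

end Translation

/-- If `Φ(I)^{1/2} Ψ(I) Φ(I)^{1/2} ≤ I` and `Φ(A)^{1/2} Ψ(B) Φ(A)^{1/2} ≤ I`, then
`Φ(A^α)^{1/2} Ψ(B^α) Φ(A^α)^{1/2} ≤ I` for all `0 ≤ α ≤ 1`. -/
theorem power_contraction_of_positive_maps {n m l : ℕ}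
    (Φ : Matrix (Fin n) (Fin n) ℂ →ₗ[ℂ] Matrix (Fin l) (Fin l) ℂ)
    (Ψ : Matrix (Fin m) (Fin m) ℂ →ₗ[ℂ] Matrix (Fin l) (Fin l) ℂ)
    (hΦ : ∀ X, X.PosSemidef → (Φ X).PosSemidef)
    (hΨ : ∀ X, X.PosSemidef → (Ψ X).PosSemidef)
    (h1 : ((1 : Matrix (Fin l) (Fin l) ℂ) -
      mpow (Φ 1) (1/2) * Ψ 1 * mpow (Φ 1) (1/2)).PosSemidef)
    (A : Matrix (Fin n) (Fin n) ℂ) (B : Matrix (Fin m) (Fin m) ℂ)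
    (hA : A.PosSemidef) (hB : B.PosSemidef)
    (hAB : ((1 : Matrix (Fin l) (Fin l) ℂ) -
      mpow (Φ A) (1/2) * Ψ B * mpow (Φ A) (1/2)).PosSemidef)
    (α : ℝ) (hα0 : 0 ≤ α) (hα1 : α ≤ 1) :
    ((1 : Matrix (Fin l) (Fin l) ℂ) -
      mpow (Φ (mpow A α)) (1/2) * Ψ (mpow B α) * mpow (Φ (mpow A α)) (1/2)).PosSemidef := by
  open scoped MatrixOrder Matrix.Norms.L2Operator in
  · rw [posSemidef_one_sub_mpow_mul_mul_mpow_iff (hΦ _ PosSemidef.one)] at h1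
    rw [posSemidef_one_sub_mpow_mul_mul_mpow_iff (hΦ _ hA)] at hAB
    rw [mpow_eq_rpow_s2 hA, mpow_eq_rpow_s2 hB,
      posSemidef_one_sub_mpow_mul_mul_mpow_iff (hΦ _ (nonneg_iff_posSemidef.mp rpow_nonneg))]
    exact conjSqrt_map_rpow_le_one
      (.mk₀ Φ fun X hX => nonneg_iff_posSemidef.mpr (hΦ X (nonneg_iff_posSemidef.mp hX)))
      (.mk₀ Ψ fun X hX => nonneg_iff_posSemidef.mpr (hΨ X (nonneg_iff_posSemidef.mp hX)))
      (nonneg_iff_posSemidef.mpr hA) (nonneg_iff_posSemidef.mpr hB) h1 hAB ⟨hα0, hα1⟩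
end

section
/- Let a, b ∈ [0,∞)^n be decreasing sequences with a weakly log-majorized by b (i.e., ∏_{i=1}^k a_i ≤ ∏_{i=1}^k b_i for all k). Then a is weakly majorized by b, i.e., ∑_{i=1}^k a_i ≤ ∑_{i=1}^k b_i for all k = 1,…,n. -/
/-!
While the `a i` are positive, the prefix-product bounds say that the partial sums of
`log a i - log b i` are nonpositive, so Abel summation against the decreasing nonnegative weights
`a i` gives `∑ a i * (log a i - log b i) ≤ 0`; together with `a i - b i ≤ a i * log (a i / b i)`
(that is, `1 - 1/t ≤ log t`) this yields `∑ a i ≤ ∑ b i`. Once some `a i` vanishes, all later ones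
do, and further terms only increase the right-hand side.
-/

open Finset

def extendByZero {M : Type*} [Zero M] {n : ℕ} (a : Fin n → M) (i : ℕ) : M :=
  if h : i < n then a ⟨i, h⟩ else 0

section ExtendByZero

variable {M : Type*} {n : ℕ}

@[simp]
lemma extendByZero_val [Zero M] (a : Fin n → M) (i : Fin n) : extendByZero a i = a i :=
  dif_pos i.isLt

lemma extendByZero_nonneg [Zero M] [Preorder M] {a : Fin n → M} (ha0 : ∀ i, 0 ≤ a i) (i : ℕ) :
    0 ≤ extendByZero a i := by
  unfold extendByZero
  split_ifs
  exacts [ha0 _, le_rfl]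

lemma antitone_extendByZero [Zero M] [Preorder M] {a : Fin n → M} (ha : Antitone a)
    (ha0 : ∀ i, 0 ≤ a i) : Antitone (extendByZero a) := by
  intro i j hij
  by_cases hj : j < n
  · simp only [extendByZero, dif_pos hj, dif_pos (hij.trans_lt hj)]
    exact ha hij
  · simpa only [extendByZero, dif_neg hj] using extendByZero_nonneg ha0 i

lemma map_valEmbedding_filter_val_lt {k : ℕ} (hk : k ≤ n) :
    (univ.filter fun i : Fin n => (i : ℕ) < k).map Fin.valEmbedding = range k := by
  ext i
  simp only [mem_map, mem_filter, mem_univ, true_and, Fin.valEmbedding_apply, mem_range]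
  exact ⟨fun ⟨j, hj, hji⟩ => hji ▸ hj, fun hi => ⟨⟨i, hi.trans_le hk⟩, hi, rfl⟩⟩

lemma sum_filter_val_lt_eq_sum_range [AddCommMonoid M] (a : Fin n → M) {k : ℕ} (hk : k ≤ n) :
    ∑ i ∈ univ.filter (fun i : Fin n => (i : ℕ) < k), a i =
      ∑ i ∈ range k, extendByZero a i := by
  simp only [← map_valEmbedding_filter_val_lt hk, sum_map, Fin.valEmbedding_apply,
    extendByZero_val]

lemma prod_filter_val_lt_eq_prod_range [CommMonoidWithZero M] (a : Fin n → M) {k : ℕ}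
    (hk : k ≤ n) :
    ∏ i ∈ univ.filter (fun i : Fin n => (i : ℕ) < k), a i =
      ∏ i ∈ range k, extendByZero a i := by
  simp only [← map_valEmbedding_filter_val_lt hk, prod_map, Fin.valEmbedding_apply,
    extendByZero_val]

end ExtendByZero

lemma sum_range_mul_nonpos_of_antitone {R : Type*} [CommRing R] [LinearOrder R]
    [IsStrictOrderedRing R] {c d : ℕ → R} (hc : Antitone c) (hc0 : ∀ i, 0 ≤ c i) {k : ℕ}
    (hd : ∀ j ≤ k, ∑ i ∈ range j, d i ≤ 0) :
    ∑ i ∈ range k, c i * d i ≤ 0 := by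
  have h := sum_range_by_parts c d (n := k)
  simp only [smul_eq_mul] at h
  rw [h, sub_nonpos]
  refine (mul_nonpos_of_nonneg_of_nonpos (hc0 _) (hd k le_rfl)).trans (sum_nonneg fun i hi => ?_)
  have hik : i + 1 ≤ k := by rw [mem_range] at hi; omega
  exact mul_nonneg_of_nonpos_of_nonpos (sub_nonpos.2 (hc i.le_succ)) (hd (i + 1) hik)

lemma sub_le_mul_log_sub_log {x y : ℝ} (hx : 0 < x) (hy : 0 < y) :
    x - y ≤ x * (Real.log x - Real.log y) := by
  have h := mul_le_mul_of_nonneg_left (Real.one_sub_inv_le_log_of_pos (div_pos hx hy)) hx.le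
  rwa [Real.log_div hx.ne' hy.ne', inv_div, mul_sub, mul_one, mul_div_cancel₀ _ hx.ne'] at h

lemma sum_range_le_of_prod_range_le_of_pos {A B : ℕ → ℝ} (hA : Antitone A)
    (hA0 : ∀ i, 0 ≤ A i) (hB0 : ∀ i, 0 ≤ B i) {k : ℕ} (hApos : ∀ i < k, 0 < A i)
    (hlog : ∀ j ≤ k, ∏ i ∈ range j, A i ≤ ∏ i ∈ range j, B i) :
    ∑ i ∈ range k, A i ≤ ∑ i ∈ range k, B i := by
  have hBpos : ∀ i < k, 0 < B i := by
    have hprod : 0 < ∏ i ∈ range k, B i :=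
      (prod_pos fun i hi => hApos i (mem_range.1 hi)).trans_le (hlog k le_rfl)
    exact fun i hi => (hB0 i).lt_of_ne (prod_ne_zero_iff.1 hprod.ne' i (mem_range.2 hi)).symm
  have hlogsum : ∀ j ≤ k, ∑ i ∈ range j, (Real.log (A i) - Real.log (B i)) ≤ 0 := by
    intro j hj
    have hAj : ∀ i ∈ range j, 0 < A i := fun i hi => hApos i ((mem_range.1 hi).trans_le hj)
    have hBj : ∀ i ∈ range j, 0 < B i := fun i hi => hBpos i ((mem_range.1 hi).trans_le hj)
    rw [sum_sub_distrib, ← Real.log_prod fun i hi => (hAj i hi).ne',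
      ← Real.log_prod fun i hi => (hBj i hi).ne', sub_nonpos]
    exact Real.log_le_log (prod_pos hAj) (hlog j hj)
  calc ∑ i ∈ range k, A i
      = ∑ i ∈ range k, B i + ∑ i ∈ range k, (A i - B i) := by
        rw [sum_sub_distrib, add_sub_cancel]
    _ ≤ ∑ i ∈ range k, B i + ∑ i ∈ range k, A i * (Real.log (A i) - Real.log (B i)) := by
        gcongr with i hi
        exact sub_le_mul_log_sub_log (hApos i (mem_range.1 hi)) (hBpos i (mem_range.1 hi))
    _ ≤ ∑ i ∈ range k, B i := by
        linarith [sum_range_mul_nonpos_of_antitone hA hA0 hlogsum]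

lemma sum_range_le_of_prod_range_le {A B : ℕ → ℝ} (hA : Antitone A) (hA0 : ∀ i, 0 ≤ A i)
    (hB0 : ∀ i, 0 ≤ B i) (k : ℕ) (hlog : ∀ j ≤ k, ∏ i ∈ range j, A i ≤ ∏ i ∈ range j, B i) :
    ∑ i ∈ range k, A i ≤ ∑ i ∈ range k, B i := by
  induction k with
  | zero => simp
  | succ k ih =>
    rcases (hA0 k).eq_or_lt with hAk | hAk
    · have := ih fun j hj => hlog j (hj.trans k.le_succ)
      rw [sum_range_succ, sum_range_succ, ← hAk]
      linarith [hB0 k]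
    · exact sum_range_le_of_prod_range_le_of_pos hA hA0 hB0
        (fun i hi => hAk.trans_le (hA (Nat.le_of_lt_succ hi))) hlog

theorem weak_majorization_of_weak_log_majorization_general {n : ℕ}
    (a b : Fin n → ℝ) (ha : Antitone a)
    (ha0 : ∀ i, 0 ≤ a i) (hb0 : ∀ i, 0 ≤ b i)
    (hlog : ∀ k : ℕ, k ≤ n →
      ∏ i ∈ Finset.univ.filter (fun i : Fin n => (i : ℕ) < k), a i ≤
        ∏ i ∈ Finset.univ.filter (fun i : Fin n => (i : ℕ) < k), b i) :
    ∀ k : ℕ, k ≤ n →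
      ∑ i ∈ Finset.univ.filter (fun i : Fin n => (i : ℕ) < k), a i ≤
        ∑ i ∈ Finset.univ.filter (fun i : Fin n => (i : ℕ) < k), b i := by
  intro k hk
  rw [sum_filter_val_lt_eq_sum_range a hk, sum_filter_val_lt_eq_sum_range b hk]
  refine sum_range_le_of_prod_range_le (antitone_extendByZero ha ha0) (extendByZero_nonneg ha0)
    (extendByZero_nonneg hb0) k fun j hj => ?_
  rw [← prod_filter_val_lt_eq_prod_range a (hj.trans hk),
    ← prod_filter_val_lt_eq_prod_range b (hj.trans hk)]
  exact hlog j (hj.trans hk)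

/-- Weak log-majorization implies weak majorization for non-negative decreasing vectors. -/
theorem weak_majorization_of_weak_log_majorization {n : ℕ}
    (a b : Fin n → ℝ) (ha : Antitone a) (hb : Antitone b)
    (ha0 : ∀ i, 0 ≤ a i) (hb0 : ∀ i, 0 ≤ b i)
    (hlog : ∀ k : ℕ, k ≤ n →
      ∏ i ∈ Finset.univ.filter (fun i : Fin n => (i : ℕ) < k), a i ≤
        ∏ i ∈ Finset.univ.filter (fun i : Fin n => (i : ℕ) < k), b i) :
    ∀ k : ℕ, k ≤ n →
      ∑ i ∈ Finset.univ.filter (fun i : Fin n => (i : ℕ) < k), a i ≤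
        ∑ i ∈ Finset.univ.filter (fun i : Fin n => (i : ℕ) < k), b i :=
  weak_majorization_of_weak_log_majorization_general a b ha ha0 hb0 hlog
end

section
/- Let ψ be a symmetric gauge function on ℝ^n and 0 < α < 1. Then for all a, b ∈ [0,∞)^n, ψ(a₁b₁,…,a_nb_n) ≤ ψ(a₁^{1/(1−α)},…,a_n^{1/(1−α)})^{1−α} · ψ(b₁^{1/α},…,b_n^{1/α})^α. (Hölder inequality for symmetric gauge functions.) -/
/-!
A sign-invariant seminorm is monotone in the absolute values of the coordinates: replacing `z j`
by `c` with `|c| ≤ z j` yields a convex combination of `z` and of `z` with its `j`-th sign flipped.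
For `x, y ≥ 0` and `u, v > 0`, weighted AM–GM gives coordinatewise
`xᵢ ^ w₁ * yᵢ ^ w₂ ≤ u ^ w₁ * v ^ w₂ * (w₁ * xᵢ / u + w₂ * yᵢ / v)`, so monotonicity and the
triangle inequality bound `p (x ^ w₁ * y ^ w₂)` by `u ^ w₁ * v ^ w₂ * (w₁ * p x / u + w₂ * p y / v)`.
Taking `u = p x + ε`, `v = p y + ε` (positive even when a gauge vanishes) and letting `ε → 0`
gives `p x ^ w₁ * p y ^ w₂`; Hölder is the case `x = a ^ (1 / (1 - α))`, `y = b ^ (1 / α)`.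
-/

open Function

namespace Seminorm

variable {ι : Type*} [DecidableEq ι] (p : Seminorm ℝ (ι → ℝ))
  (hflip : ∀ z j, p (update z j (-z j)) = p z)

include hflip

theorem apply_update_le_of_abs_le {z : ι → ℝ} {j : ι} {c : ℝ} (hc : |c| ≤ z j) :
    p (update z j c) ≤ p z := by
  rcases (abs_nonneg c |>.trans hc).eq_or_lt with hz | hz
  · have hc₀ : c = 0 := abs_nonpos_iff.mp (by rwa [← hz] at hc)
    rw [hc₀, hz, update_eq_self]
  obtain ⟨hc₁, hc₂⟩ := abs_le.mp hc
  set t := (z j + c) / (2 * z j)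
  have ht₀ : 0 ≤ t := div_nonneg (by linarith) (by positivity)
  have ht₁ : t ≤ 1 := (div_le_one (by positivity)).mpr (by linarith)
  have hcomb : update z j c = t • z + (1 - t) • update z j (-z j) := by
    ext i
    rcases eq_or_ne i j with rfl | hij
    · simp only [update_self, Pi.add_apply, Pi.smul_apply, smul_eq_mul, t]
      field_simp
      ring
    · simp only [update_of_ne hij, Pi.add_apply, Pi.smul_apply, smul_eq_mul]
      ring
  calc p (update z j c) ≤ t * p z + (1 - t) * p (update z j (-z j)) := by
        rw [hcomb]
        exact p.convexOn.2 (Set.mem_univ _) (Set.mem_univ _) ht₀ (by linarith) (by ring)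
    _ = p z := by rw [hflip]; ring

theorem apply_le_apply_of_abs_le [Fintype ι] {x y : ι → ℝ} (hxy : ∀ i, |x i| ≤ y i) :
    p x ≤ p y := by
  have hmix : ∀ s : Finset ι, p x ≤ p (s.piecewise y x) := by
    intro s
    induction s using Finset.induction_on with
    | empty => simp
    | insert j s hj ih =>
      refine ih.trans ?_
      have hundo : s.piecewise y x =
          update ((insert j s).piecewise y x) j (x j) := by
        rw [Finset.piecewise_insert, update_idem, eq_comm, update_eq_self_iff,
          Finset.piecewise_eq_of_notMem _ _ _ hj]
      rw [hundo]
      exact p.apply_update_le_of_abs_le hflip (by simpa using hxy j)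
  simpa using hmix Finset.univ

variable [Fintype ι] {x y : ι → ℝ} (hx : 0 ≤ x) (hy : 0 ≤ y) {w₁ w₂ : ℝ}
  (hw₁ : 0 ≤ w₁) (hw₂ : 0 ≤ w₂) (hw : w₁ + w₂ = 1)

include hx hy hw₁ hw₂ hw

theorem apply_rpow_mul_rpow_le_of_pos {u v : ℝ} (hu : 0 < u) (hv : 0 < v) :
    p (fun i => x i ^ w₁ * y i ^ w₂) ≤
      u ^ w₁ * v ^ w₂ * (w₁ * (p x / u) + w₂ * (p y / v)) := by
  have hpoint : ∀ i, |x i ^ w₁ * y i ^ w₂| ≤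
      u ^ w₁ * v ^ w₂ * (w₁ * (x i / u) + w₂ * (y i / v)) := by
    intro i
    have hxi := hx i
    have hyi := hy i
    calc |x i ^ w₁ * y i ^ w₂| = u ^ w₁ * v ^ w₂ * ((x i / u) ^ w₁ * (y i / v) ^ w₂) := by
          rw [abs_of_nonneg (mul_nonneg (Real.rpow_nonneg hxi _) (Real.rpow_nonneg hyi _)),
            Real.div_rpow hxi hu.le, Real.div_rpow hyi hv.le]
          field_simp
      _ ≤ _ := by
          gcongr
          exact Real.geom_mean_le_arith_mean2_weighted hw₁ hw₂ (div_nonneg hxi hu.le)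
            (div_nonneg hyi hv.le) hw
  have hsplit : (fun i => u ^ w₁ * v ^ w₂ * (w₁ * (x i / u) + w₂ * (y i / v))) =
      (u ^ w₁ * v ^ w₂) • ((w₁ / u) • x + (w₂ / v) • y) := by
    ext i
    simp only [Pi.smul_apply, Pi.add_apply, smul_eq_mul]
    ring
  calc p (fun i => x i ^ w₁ * y i ^ w₂)
      ≤ p ((u ^ w₁ * v ^ w₂) • ((w₁ / u) • x + (w₂ / v) • y)) :=
        hsplit ▸ p.apply_le_apply_of_abs_le hflip hpoint
    _ ≤ u ^ w₁ * v ^ w₂ * ((w₁ / u) * p x + (w₂ / v) * p y) := by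
        rw [map_smul_eq_mul, Real.norm_of_nonneg (by positivity)]
        gcongr
        refine (map_add_le_add p _ _).trans_eq ?_
        rw [map_smul_eq_mul, map_smul_eq_mul, Real.norm_of_nonneg (by positivity),
          Real.norm_of_nonneg (by positivity)]
    _ = _ := by ring

theorem apply_rpow_mul_rpow_le :
    p (fun i => x i ^ w₁ * y i ^ w₂) ≤ p x ^ w₁ * p y ^ w₂ := by
  have hε : ∀ ε > 0, p (fun i => x i ^ w₁ * y i ^ w₂) ≤ (p x + ε) ^ w₁ * (p y + ε) ^ w₂ := by
    intro ε hε
    have hux : 0 < p x + ε := by positivity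
    have hvy : 0 < p y + ε := by positivity
    refine (p.apply_rpow_mul_rpow_le_of_pos hflip hx hy hw₁ hw₂ hw hux hvy).trans ?_
    calc (p x + ε) ^ w₁ * (p y + ε) ^ w₂ * (w₁ * (p x / (p x + ε)) + w₂ * (p y / (p y + ε)))
        ≤ (p x + ε) ^ w₁ * (p y + ε) ^ w₂ * (w₁ * 1 + w₂ * 1) := by
          gcongr <;> rw [div_le_one (by assumption)] <;> linarith
      _ = _ := by rw [mul_one, mul_one, hw, mul_one]
  have hcont : Continuous fun ε : ℝ => (p x + ε) ^ w₁ * (p y + ε) ^ w₂ :=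
    ((Real.continuous_rpow_const hw₁).comp (continuous_const.add continuous_id)).mul
      ((Real.continuous_rpow_const hw₂).comp (continuous_const.add continuous_id))
  have hlim := (hcont.tendsto 0).mono_left (nhdsWithin_le_nhds (s := Set.Ioi 0))
  simp only [add_zero] at hlim
  exact ge_of_tendsto hlim (eventually_nhdsWithin_of_forall hε)

end Seminorm

theorem symmetric_gauge_holder_general {n : ℕ}
    (ψ : (Fin n → ℝ) → ℝ)
    (ψ_add : ∀ x y, ψ (x + y) ≤ ψ x + ψ y)
    (ψ_smul : ∀ (c : ℝ) x, ψ (c • x) = |c| * ψ x)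
    (ψ_sign : ∀ (ε x : Fin n → ℝ), (∀ i, ε i = 1 ∨ ε i = -1) →
      ψ (fun i => ε i * x i) = ψ x)
    (α : ℝ) (hα0 : 0 < α) (hα1 : α < 1)
    (a b : Fin n → ℝ) (ha : ∀ i, 0 ≤ a i) (hb : ∀ i, 0 ≤ b i) :
    ψ (fun i => a i * b i) ≤
      (ψ (fun i => a i ^ (1/(1-α)))) ^ (1-α) * (ψ (fun i => b i ^ (1/α))) ^ α := by
  let p : Seminorm ℝ (Fin n → ℝ) := .of ψ ψ_add (by simpa only [Real.norm_eq_abs] using ψ_smul)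
  have hflip : ∀ z j, p (update z j (-z j)) = p z := fun z j => by
    have hε : ∀ i, update (1 : Fin n → ℝ) j (-1) i = 1 ∨ update (1 : Fin n → ℝ) j (-1) i = -1 :=
      fun i => by rcases eq_or_ne i j with rfl | hij <;> simp [*]
    show ψ _ = ψ z
    rw [← ψ_sign _ z hε]
    congr 1
    ext i
    rcases eq_or_ne i j with rfl | hij <;> simp [*]
  have hab : (fun i => a i * b i) = fun i => (a i ^ (1/(1-α))) ^ (1-α) * (b i ^ (1/α)) ^ α := by
    ext i
    rw [one_div, one_div, Real.rpow_inv_rpow (ha i) (by linarith),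
      Real.rpow_inv_rpow (hb i) hα0.ne']
  rw [hab]
  exact p.apply_rpow_mul_rpow_le hflip (fun i => Real.rpow_nonneg (ha i) _)
    (fun i => Real.rpow_nonneg (hb i) _) (by linarith) hα0.le (by ring)

/-- Hölder inequality for symmetric gauge functions:
`ψ(a·b) ≤ ψ(a^{1/(1-α)})^{1-α} ψ(b^{1/α})^α`. -/
theorem symmetric_gauge_holder {n : ℕ}
    (ψ : (Fin n → ℝ) → ℝ)
    (ψ_add : ∀ x y, ψ (x + y) ≤ ψ x + ψ y)
    (ψ_smul : ∀ (c : ℝ) x, ψ (c • x) = |c| * ψ x)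
    (ψ_pos : ∀ x, x ≠ 0 → 0 < ψ x)
    (ψ_perm : ∀ (σ : Equiv.Perm (Fin n)) x, ψ (x ∘ σ) = ψ x)
    (ψ_sign : ∀ (ε x : Fin n → ℝ), (∀ i, ε i = 1 ∨ ε i = -1) →
      ψ (fun i => ε i * x i) = ψ x)
    (α : ℝ) (hα0 : 0 < α) (hα1 : α < 1)
    (a b : Fin n → ℝ) (ha : ∀ i, 0 ≤ a i) (hb : ∀ i, 0 ≤ b i) :
    ψ (fun i => a i * b i) ≤
      (ψ (fun i => a i ^ (1/(1-α)))) ^ (1-α) * (ψ (fun i => b i ^ (1/α))) ^ α :=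
  symmetric_gauge_holder_general ψ ψ_add ψ_smul ψ_sign α hα0 hα1 a b ha hb
end

section
/- Let E be an orthogonal projection in M_n, A ∈ M_n⁺ positive definite, 0 < α < 1, and p ≥ 0. Then A^p #_α E = (E A^{−p} E)^{α−1}, where the power (α−1) is taken of the compression E A^{−p} E restricted to the range of E (generalized inverse sense). -/
open Matrix Finset
open scoped ComplexOrder

/-!
Write `B = A^p`, `S = B^{-1/2}` and `C = E S`, so that `S E S = Cᴴ C` and `E B⁻¹ E = C Cᴴ`.
On a finite spectrum every function is a polynomial, hence `Cᴴ g(C Cᴴ) C = (g · id)(Cᴴ C)` for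
all `g`; with `g = x^{α-1}` this gives `(Cᴴ C)^α = Cᴴ (C Cᴴ)^{α-1} C`. Conjugating by
`B^{1/2} = S⁻¹` turns the outer `Cᴴ`, `C` into `E`, and `E` is absorbed by `(C Cᴴ)^{α-1}`
because `C Cᴴ` lives on the range of `E` and `0^{α-1} = 0` for `α ≠ 1`.
-/

open Polynomial

theorem SemiconjBy.aeval {R A : Type*} [CommSemiring R] [Semiring A] [Algebra R A]
    {x a b : A} (h : SemiconjBy x a b) (q : R[X]) :
    SemiconjBy x (aeval a q) (aeval b q) := by
  induction q using Polynomial.induction_on' with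
  | add p q hp hq => simpa only [map_add] using hp.add_right hq
  | monomial k c =>
    simp only [aeval_monomial]
    exact SemiconjBy.mul_right (Algebra.commute_algebraMap_right c x) (h.pow_right k)

theorem Set.Finite.exists_polynomial_eqOn {F : Type*} [Field F] [DecidableEq F] {s : Set F}
    (hs : s.Finite) (f : F → F) : ∃ q : F[X], s.EqOn f (q.eval ·) :=
  ⟨Lagrange.interpolate hs.toFinset id f, fun _ hx ↦
    (Lagrange.eval_interpolate_at_node f (Set.injOn_id _) (hs.mem_toFinset.2 hx)).symm⟩

namespace Matrix

variable {m 𝕜 : Type*} [RCLike 𝕜] [Fintype m] [DecidableEq m]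

lemma cfc_eq_aeval {M : Matrix m m 𝕜} (hM : IsSelfAdjoint M) {f : ℝ → ℝ} {q : ℝ[X]}
    (hfq : (spectrum ℝ M).EqOn f (q.eval ·)) : cfc f M = aeval M q := by
  rw [cfc_congr hfq, cfc_polynomial q M]

lemma conjTranspose_mul_cfc_mul (C : Matrix m m 𝕜) (g : ℝ → ℝ) :
    Cᴴ * cfc g (C * Cᴴ) * C = cfc (fun x ↦ g x * x) (Cᴴ * C) := by
  have hCC : IsSelfAdjoint (C * Cᴴ) := (posSemidef_self_mul_conjTranspose C).1.isSelfAdjoint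
  have hCC' : IsSelfAdjoint (Cᴴ * C) := (posSemidef_conjTranspose_mul_self C).1.isSelfAdjoint
  have hsemi : SemiconjBy Cᴴ (C * Cᴴ) (Cᴴ * C) := (mul_assoc Cᴴ C Cᴴ).symm
  obtain ⟨q, hq⟩ := ((finite_real_spectrum (A := C * Cᴴ)).union
    (finite_real_spectrum (A := Cᴴ * C))).exists_polynomial_eqOn g
  rw [cfc_eq_aeval hCC (hq.mono Set.subset_union_left),
    cfc_eq_aeval hCC' (q := q * X) fun x hx ↦ by
      simp [hq (Set.subset_union_right hx)],
    map_mul, aeval_X, mul_assoc, ← mul_assoc Cᴴ, (hsemi.aeval q).eq, mul_assoc]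

lemma mul_cfc_mul_eq_cfc {E N : Matrix m m 𝕜} (hN : IsSelfAdjoint N) (hEN : E * N = N)
    (hNE : N * E = N) {f : ℝ → ℝ} (hf : f 0 = 0) : E * cfc f N * E = cfc f N := by
  obtain ⟨q, hq⟩ := (finite_real_spectrum (A := N)).insert 0 |>.exists_polynomial_eqOn f
  obtain ⟨r, rfl⟩ : X ∣ q := X_dvd_iff.2 <| by
    rw [coeff_zero_eq_eval_zero]; exact (hq (Set.mem_insert 0 _)).symm.trans hf
  have hcomm : N * aeval N r = aeval N r * N := (SemiconjBy.aeval (Commute.refl N) r).eq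
  rw [cfc_eq_aeval hN (hq.mono (Set.subset_insert 0 _)), map_mul, aeval_X, ← mul_assoc E, hEN,
    hcomm, mul_assoc, hNE]

lemma PosSemidef.nonneg_of_mem_spectrum {M : Matrix m m 𝕜} (hM : M.PosSemidef) {x : ℝ}
    (hx : x ∈ spectrum ℝ M) : 0 ≤ x := by
  rw [hM.1.spectrum_real_eq_range_eigenvalues] at hx
  obtain ⟨i, rfl⟩ := hx
  exact hM.eigenvalues_nonneg i

lemma PosDef.pos_of_mem_spectrum {M : Matrix m m 𝕜} (hM : M.PosDef) {x : ℝ}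
    (hx : x ∈ spectrum ℝ M) : 0 < x := by
  rw [hM.1.spectrum_real_eq_range_eigenvalues] at hx
  obtain ⟨i, rfl⟩ := hx
  exact hM.eigenvalues_pos i

lemma cfc_rpow_conjTranspose_mul_self (C : Matrix m m 𝕜) {α : ℝ} (hα : α ≠ 0) :
    cfc (fun x : ℝ ↦ x ^ α) (Cᴴ * C) = Cᴴ * cfc (fun x : ℝ ↦ x ^ (α - 1)) (C * Cᴴ) * C := by
  rw [conjTranspose_mul_cfc_mul]
  refine cfc_congr fun x hx ↦ ?_
  have hx0 := (posSemidef_conjTranspose_mul_self C).nonneg_of_mem_spectrum hx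
  rw [← Real.rpow_add_one' hx0 (by simpa using hα), sub_add_cancel]

lemma cfc_rpow_mul_cfc_rpow {M : Matrix m m 𝕜} (hM : ∀ x ∈ spectrum ℝ M, 0 < x) (a b : ℝ) :
    cfc (fun x : ℝ ↦ x ^ a) M * cfc (fun x : ℝ ↦ x ^ b) M = cfc (fun x : ℝ ↦ x ^ (a + b)) M := by
  rw [← cfc_mul _ _ M (finite_real_spectrum.continuousOn _) (finite_real_spectrum.continuousOn _)]
  exact cfc_congr fun x hx ↦ (Real.rpow_add (hM x hx) a b).symm

lemma cfc_rpow_cfc_rpow {M : Matrix m m 𝕜} (hM : IsSelfAdjoint M)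
    (hM0 : ∀ x ∈ spectrum ℝ M, 0 ≤ x) (a b : ℝ) :
    cfc (fun x : ℝ ↦ x ^ b) (cfc (fun x : ℝ ↦ x ^ a) M) = cfc (fun x : ℝ ↦ x ^ (a * b)) M := by
  rw [← cfc_comp _ _ M hM ((finite_real_spectrum.image _).continuousOn _)
    (finite_real_spectrum.continuousOn _)]
  exact cfc_congr fun x hx ↦ (Real.rpow_mul (hM0 x hx) a b).symm

lemma pos_of_mem_spectrum_cfc_rpow {M : Matrix m m 𝕜} (hM : IsSelfAdjoint M)
    (hM0 : ∀ x ∈ spectrum ℝ M, 0 < x) (a : ℝ) :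
    ∀ x ∈ spectrum ℝ (cfc (fun x : ℝ ↦ x ^ a) M), 0 < x := by
  rw [cfc_map_spectrum _ M hM (finite_real_spectrum.continuousOn _)]
  rintro _ ⟨x, hx, rfl⟩
  exact Real.rpow_pos_of_pos (hM0 x hx) a

lemma mul_cfc_rpow_mul_eq_cfc_rpow_sub_one {E S T : Matrix m m 𝕜} (hE : E.IsHermitian)
    (hE2 : E * E = E) (hS : S.IsHermitian) (hTS : T * S = 1) {α : ℝ} (hα0 : α ≠ 0)
    (hα1 : α ≠ 1) :
    T * cfc (fun x : ℝ ↦ x ^ α) (S * E * S) * T =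
      cfc (fun x : ℝ ↦ x ^ (α - 1)) (E * (S * S) * E) := by
  set C := E * S with hC
  have hCH : Cᴴ = S * E := by rw [conjTranspose_mul, hS.eq, hE.eq]
  have hSES : S * E * S = Cᴴ * C := by
    rw [hCH, hC, ← mul_assoc (S * E) E S, mul_assoc S E E, hE2]
  have hESSE : E * (S * S) * E = C * Cᴴ := by
    rw [hCH, hC]; simp only [mul_assoc]
  have hTC : T * Cᴴ = E := by rw [hCH, ← mul_assoc, hTS, one_mul]
  have hCT : C * T = E := by rw [hC, mul_assoc, mul_eq_one_comm.1 hTS, mul_one]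
  have hECC : E * (C * Cᴴ) = C * Cᴴ := by rw [← hESSE, ← mul_assoc, ← mul_assoc, hE2]
  have hCCE : C * Cᴴ * E = C * Cᴴ := by rw [← hESSE, mul_assoc, hE2]
  rw [hSES, hESSE, cfc_rpow_conjTranspose_mul_self C hα0]
  calc T * (Cᴴ * cfc (fun x : ℝ ↦ x ^ (α - 1)) (C * Cᴴ) * C) * T
      = (T * Cᴴ) * cfc (fun x : ℝ ↦ x ^ (α - 1)) (C * Cᴴ) * (C * T) := by simp only [mul_assoc]
    _ = cfc (fun x : ℝ ↦ x ^ (α - 1)) (C * Cᴴ) := by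
      rw [hTC, hCT, mul_cfc_mul_eq_cfc (posSemidef_self_mul_conjTranspose C).1.isSelfAdjoint
        hECC hCCE (f := fun x : ℝ ↦ x ^ (α - 1)) (Real.zero_rpow (sub_ne_zero.2 hα1))]

end Matrix

lemma cfcH_eq_cfc {n : ℕ} {M : Matrix (Fin n) (Fin n) ℂ} (hM : M.IsHermitian) (f : ℝ → ℝ) :
    cfcH f M = cfc f M := by
  rw [cfcH, dif_pos hM, hM.cfc_eq]

lemma mpow_eq_cfc {n : ℕ} {M : Matrix (Fin n) (Fin n) ℂ} (hM : M.IsHermitian) (p : ℝ) :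
    mpow M p = cfc (fun x : ℝ ↦ x ^ p) M :=
  cfcH_eq_cfc hM _

lemma gmean_projection {n : ℕ} {B E : Matrix (Fin n) (Fin n) ℂ} (hB : B.IsHermitian)
    (hB0 : ∀ x ∈ spectrum ℝ B, 0 < x) (hE : E.IsHermitian) (hE2 : E * E = E) {α : ℝ}
    (hα0 : α ≠ 0) (hα1 : α ≠ 1) :
    gmean α B E = cfcH (fun x : ℝ ↦ x ^ (α - 1)) (E * mpow B (-1) * E) := by
  have hconj {X Y : Matrix (Fin n) (Fin n) ℂ} (hX : X.IsHermitian) (hY : Y.IsHermitian) :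
      (X * Y * X).IsHermitian := by
    simpa only [hX.eq] using isHermitian_conjTranspose_mul_mul X hY
  set S := cfc (fun x : ℝ ↦ x ^ (-(1 / 2) : ℝ)) B
  have hS : S.IsHermitian := cfc_predicate _ B
  have hTS : cfc (fun x : ℝ ↦ x ^ (1 / 2 : ℝ)) B * S = 1 := by
    rw [cfc_rpow_mul_cfc_rpow hB0]
    simpa using cfc_const_one ℝ B
  have hSS : S * S = cfc (fun x : ℝ ↦ x ^ (-1 : ℝ)) B := by
    rw [cfc_rpow_mul_cfc_rpow hB0]; norm_num
  rw [gmean, mpow_eq_cfc hB, mpow_eq_cfc hB, mpow_eq_cfc hB, cfcH_eq_cfc (hconj hS hE),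
    cfcH_eq_cfc (hconj hE (cfc_predicate (fun x : ℝ ↦ x ^ (-1 : ℝ)) B)), ← hSS,
    mul_cfc_rpow_mul_eq_cfc_rpow_sub_one hE hE2 hS hTS hα0 hα1]

theorem gmean_projection_power_general {n : ℕ}
    (A E : Matrix (Fin n) (Fin n) ℂ) (hA : A.PosDef)
    (hE : E.IsHermitian) (hE2 : E * E = E)
    (α : ℝ) (hα0 : 0 < α) (hα1 : α < 1) (p : ℝ) :
    gmean α (mpow A p) E = cfcH (fun x : ℝ => x ^ (α - 1)) (E * mpow A (-p) * E) := by
  have hA0 : ∀ x ∈ spectrum ℝ A, 0 < x := fun _ ↦ hA.pos_of_mem_spectrum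
  have hAp : (mpow A p).IsHermitian := by
    rw [mpow_eq_cfc hA.isHermitian]; exact cfc_predicate _ A
  have hAp0 : ∀ x ∈ spectrum ℝ (mpow A p), 0 < x := by
    rw [mpow_eq_cfc hA.isHermitian]; exact pos_of_mem_spectrum_cfc_rpow hA.isHermitian hA0 p
  rw [gmean_projection hAp hAp0 hE hE2 hα0.ne' hα1.ne, mpow_eq_cfc hAp, mpow_eq_cfc hA.isHermitian,
    cfc_rpow_cfc_rpow hA.isHermitian (fun x hx ↦ (hA0 x hx).le), mul_neg_one,
    ← mpow_eq_cfc hA.isHermitian]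

/-- `A^p #_α E = (E A^{-p} E)^{α-1}` where the power `α-1` is taken on the range of `E`
(zero on the kernel, as given by the functional calculus with `0^{α-1} = 0`). -/
theorem gmean_projection_power {n : ℕ}
    (A E : Matrix (Fin n) (Fin n) ℂ) (hA : A.PosDef)
    (hE : E.IsHermitian) (hE2 : E * E = E)
    (α : ℝ) (hα0 : 0 < α) (hα1 : α < 1) (p : ℝ) (hp : 0 ≤ p) :
    gmean α (mpow A p) E = cfcH (fun x : ℝ => x ^ (α - 1)) (E * mpow A (-p) * E) :=
  gmean_projection_power_general A E hA hE hE2 α hα0 hα1 p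
end
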